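/- Let 0 < J < 1 satisfy (1+J)(1/(1−J) − 1/(2+J)) ≥ log((2+J)/(1−J)) (i.e., J is at least the unique positive root J_c ≈ 0.2419 of this expression). Let 0 < P < Q satisfy (1+J)P − log P = (1+J)Q − log Q and Q ≥ 1/(1−J). Then P ≤ 1/(2+J). -/
import Mathlib


open Real

/-- On (0, 1/(1+J)] the map x ↦ (1+J)x − log x is strictly decreasing. -/
lemma stmt18_dec (J : ℝ) {a b : ℝ} (ha : 0 < a) (hab : a < b) (hb : b ≤ 1 / (1 + J))
    (hJ : 0 < 1 + J) :
    (1 + J) * b - Real.log b < (1 + J) * a - Real.log a := by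
  have hb0 : 0 < b := ha.trans hab
  have hbJ : b * (1 + J) ≤ 1 := by
    rw [le_div_iff₀ hJ] at hb; linarith
  have h1 : Real.log (a / b) < a / b - 1 :=
    Real.log_lt_sub_one_of_pos (by positivity) (by
      intro hc
      have : a = b := by field_simp at hc; linarith
      linarith)
  rw [Real.log_div ha.ne' hb0.ne'] at h1
  have h2 : (Real.log a - Real.log b) * b < a - b := by
    have := mul_lt_mul_of_pos_right h1 hb0
    calc (Real.log a - Real.log b) * b < (a / b - 1) * b := this
      _ = a - b := by field_simp
  nlinarith [h2, hbJ, hab, hb0]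

/-- On [1/(1+J), ∞) the map x ↦ (1+J)x − log x is strictly increasing. -/
lemma stmt18_inc (J : ℝ) {a b : ℝ} (ha : 1 / (1 + J) ≤ a) (hab : a < b)
    (hJ : 0 < 1 + J) :
    (1 + J) * a - Real.log a < (1 + J) * b - Real.log b := by
  have ha0 : 0 < a := lt_of_lt_of_le (by positivity) ha
  have hb0 : 0 < b := ha0.trans hab
  have haJ : 1 ≤ a * (1 + J) := by
    rw [div_le_iff₀ hJ] at ha; linarith
  have h1 : Real.log (b / a) < b / a - 1 :=
    Real.log_lt_sub_one_of_pos (by positivity) (by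
      intro hc
      have : b = a := by field_simp at hc; linarith
      linarith)
  rw [Real.log_div hb0.ne' ha0.ne'] at h1
  have h2 : (Real.log b - Real.log a) * a < b - a := by
    have := mul_lt_mul_of_pos_right h1 ha0
    calc (Real.log b - Real.log a) * a < (b / a - 1) * a := this
      _ = b - a := by field_simp
  nlinarith [h2, haJ, hab, ha0]

/-- if 0 < J < 1 with (1+J)(1/(1−J) − 1/(2+J)) ≥ log((2+J)/(1−J))
(i.e. J ≥ J_c), and 0 < P < Q satisfy (1+J)P − log P = (1+J)Q − log Q together with
Q ≥ 1/(1−J), then P ≤ 1/(2+J). -/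
theorem stmt_18 (J P Q : ℝ) (hJ0 : 0 < J) (hJ1 : J < 1)
    (hJc : Real.log ((2 + J) / (1 - J)) ≤ (1 + J) * (1 / (1 - J) - 1 / (2 + J)))
    (hP : 0 < P) (hPQ : P < Q)
    (h : (1 + J) * P - Real.log P = (1 + J) * Q - Real.log Q)
    (hQ : 1 / (1 - J) ≤ Q) :
    P ≤ 1 / (2 + J) := by
  have hJp : (0:ℝ) < 1 + J := by linarith
  have h1mJ : (0:ℝ) < 1 - J := by linarith
  have h2pJ : (0:ℝ) < 2 + J := by linarith
  by_contra hcon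
  push_neg at hcon
  set hfun := fun x : ℝ => (1 + J) * x - Real.log x with hhf
  -- key comparison points
  have hcrit : 1 / (1 + J) < 1 / (1 - J) := by
    apply div_lt_div_of_pos_left one_pos h1mJ; linarith
  have hC : (1 + J) * (1 / (2 + J)) - Real.log (1 / (2 + J)) ≤
      (1 + J) * (1 / (1 - J)) - Real.log (1 / (1 - J)) := by
    rw [Real.log_div h2pJ.ne' h1mJ.ne'] at hJc
    rw [Real.log_div one_ne_zero h2pJ.ne', Real.log_div one_ne_zero h1mJ.ne',
      Real.log_one]
    ring_nf
    ring_nf at hJc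
    linarith
  have hB : (1 + J) * (1 / (1 - J)) - Real.log (1 / (1 - J)) ≤
      (1 + J) * Q - Real.log Q := by
    rcases eq_or_lt_of_le hQ with heq | hlt
    · rw [heq]
    · exact le_of_lt (stmt18_inc J (le_of_lt hcrit) hlt hJp)
  by_cases hPc : P < 1 / (1 + J)
  · have hA : (1 + J) * P - Real.log P < (1 + J) * (1 / (2 + J)) - Real.log (1 / (2 + J)) :=
      stmt18_dec J (by positivity) hcon (le_of_lt hPc) hJp
    linarith
  · push_neg at hPc
    have := stmt18_inc J hPc hPQ hJp
    linarith
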